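/- Let w be a bivector field on M and H a symmetric nonlinear connection on T*M with adapted frame δ/δx^i = ∂/∂x^i − N_{ij}∂/∂p_j. The horizontal lift w^H = (1/2)w^{ij}(x) δ/δx^i ∧ δ/δx^j satisfies [w^H, w^H] = 0 if and only if Σ_{cyclic(i,j,k)} w^{hk} ∂w^{ij}/∂x^h = 0 (i.e. [w,w]=0) and w^{il}w^{jh}R_{klh} = 0, where R_{kij} = δN_{kj}/δx^i − δN_{ki}/δx^j is the curvature of the connection. Equivalently: w^H is Poisson iff w is Poisson on M and R(X_f^H, X_g^H) = 0 for all f,g ∈ C^∞(M), and in that case π : (T*M, w^H) → (M,w) is a Poisson map. -/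

import Mathlib

open scoped BigOperators
noncomputable section

/-- The model of the base manifold `M`: global coordinates `(x^i)` on an `n`-dimensional chart. -/
abbrev Vec (n : ℕ) := Fin n → ℝ
/-- The model of the cotangent bundle `T*M`: points `(x, p)`. -/
abbrev Cot (n : ℕ) := Vec n × Vec n
/-- Index type for the `2n` coordinates `(x^i, p_i)` of `T*M`. -/
abbrev Idx (n : ℕ) := Fin n ⊕ Fin n

/-- Smoothness. -/
def Sm {E F : Type*} [NormedAddCommGroup E] [NormedSpace ℝ E]
    [NormedAddCommGroup F] [NormedSpace ℝ F] (f : E → F) : Prop := ContDiff ℝ (⊤ : ℕ∞) f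

/-- Partial derivative `∂f/∂x^i` on the base. -/
def pd {n : ℕ} (i : Fin n) (f : Vec n → ℝ) (x : Vec n) : ℝ := fderiv ℝ f x (Pi.single i 1)

/-- Coordinate direction in `T*M`. -/
def dirOf {n : ℕ} : Idx n → Cot n
  | Sum.inl i => (Pi.single i 1, 0)
  | Sum.inr i => (0, Pi.single i 1)

/-- Partial derivative on `T*M` in the direction of the `a`-th coordinate. -/
def DT {n : ℕ} (a : Idx n) (F : Cot n → ℝ) (z : Cot n) : ℝ := fderiv ℝ F z (dirOf a)
/-- `∂/∂x^i` on `T*M`. -/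
def Dxx {n : ℕ} (i : Fin n) : (Cot n → ℝ) → Cot n → ℝ := DT (Sum.inl i)
/-- `∂/∂p_i` on `T*M`. -/
def Dpp {n : ℕ} (i : Fin n) : (Cot n → ℝ) → Cot n → ℝ := DT (Sum.inr i)

/-- A bivector field on `T*M`, given by its component matrix `W^{AB}`
(the bivector is `(1/2) W^{AB} ∂_A ∧ ∂_B`). -/
abbrev Biv (n : ℕ) := Cot n → Idx n → Idx n → ℝ

/-- The bracket of functions on `T*M` defined by a bivector field `W`. -/
def bkt {n : ℕ} (W : Biv n) (F G : Cot n → ℝ) (z : Cot n) : ℝ :=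
  ∑ a : Idx n, ∑ b : Idx n, W z a b * DT a F z * DT b G z

/-- The bracket of functions on `M` defined by a bivector field `w` on `M`
(components `w^{ij}`, the bivector being `(1/2) w^{ij} ∂_i ∧ ∂_j`). -/
def bktM {n : ℕ} (w : Vec n → Fin n → Fin n → ℝ) (f g : Vec n → ℝ) (x : Vec n) : ℝ :=
  ∑ i, ∑ j, w x i j * pd i f x * pd j g x

def SkewT {n : ℕ} (W : Biv n) : Prop := ∀ z a b, W z a b = - W z b a
def SmoothT {n : ℕ} (W : Biv n) : Prop := ∀ a b, Sm fun z => W z a b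
/-- The Jacobi identity for the bracket of `W`, i.e. `[W,W] = 0`. -/
def JacobiT {n : ℕ} (W : Biv n) : Prop :=
  ∀ F G H : Cot n → ℝ, Sm F → Sm G → Sm H → ∀ z,
    bkt W (bkt W F G) H z + bkt W (bkt W G H) F z + bkt W (bkt W H F) G z = 0

def SkewM {n : ℕ} (w : Vec n → Fin n → Fin n → ℝ) : Prop := ∀ x i j, w x i j = - w x j i
def SmoothM {n : ℕ} (w : Vec n → Fin n → Fin n → ℝ) : Prop := ∀ i j, Sm fun x => w x i j
def JacobiM {n : ℕ} (w : Vec n → Fin n → Fin n → ℝ) : Prop :=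
  ∀ f g h : Vec n → ℝ, Sm f → Sm g → Sm h → ∀ x,
    bktM w (bktM w f g) h x + bktM w (bktM w g h) f x + bktM w (bktM w h f) g x = 0

/-- A Poisson structure on `T*M`. -/
def PoissonT {n : ℕ} (W : Biv n) : Prop := SkewT W ∧ SmoothT W ∧ JacobiT W
/-- A Poisson structure on `M`. -/
def PoissonM {n : ℕ} (w : Vec n → Fin n → Fin n → ℝ) : Prop := SkewM w ∧ SmoothM w ∧ JacobiM w

/-- `F : T*M → ℝ` is a fiberwise polynomial of degree `≤ k`. -/
def PolyDeg {n : ℕ} (k : ℕ) (F : Cot n → ℝ) : Prop :=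
  ∃ P : Vec n → MvPolynomial (Fin n) ℝ, (∀ x, (P x).totalDegree ≤ k) ∧
    ∀ x p, F (x, p) = MvPolynomial.eval p (P x)

/-- `F : T*M → ℝ` is a fiberwise homogeneous polynomial of degree `k`. -/
def HomogPoly {n : ℕ} (k : ℕ) (F : Cot n → ℝ) : Prop :=
  ∃ P : Vec n → MvPolynomial (Fin n) ℝ, (∀ x, (P x).IsHomogeneous k) ∧
    ∀ x p, F (x, p) = MvPolynomial.eval p (P x)

/-- Polynomially graded bivector field: brackets of fiberwise polynomials of degree `≤ h`
and `≤ k` are fiberwise polynomials of degree `≤ h + k`. -/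
def PolyGraded {n : ℕ} (W : Biv n) : Prop :=
  ∀ (h k : ℕ) (F G : Cot n → ℝ), Sm F → Sm G → PolyDeg h F → PolyDeg k G →
    PolyDeg (h + k) (bkt W F G)

/-- Graded bivector field: brackets of fiberwise homogeneous polynomials of degrees `h`, `k`
are fiberwise homogeneous of degree `h + k`. -/
def HGraded {n : ℕ} (W : Biv n) : Prop :=
  ∀ (h k : ℕ) (F G : Cot n → ℝ), Sm F → Sm G → HomogPoly h F → HomogPoly k G →
    HomogPoly (h + k) (bkt W F G)

/-- The momentum `m(X)` of a vector field `X` on `M`. -/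
def mmt {n : ℕ} (X : Vec n → Vec n) (z : Cot n) : ℝ := ∑ i, z.2 i * X z.1 i

/-- The quadratic fiberwise polynomial `s(Q)` of a symmetric 2-contravariant tensor field. -/
def sQ {n : ℕ} (G : Vec n → Fin n → Fin n → ℝ) (z : Cot n) : ℝ :=
  ∑ i, ∑ j, G z.1 i j * z.2 i * z.2 j

/-- `W` is `π`-related to `w`: the projection `π : T*M → M` is a Poisson mapping. -/
def PiRel {n : ℕ} (W : Biv n) (w : Vec n → Fin n → Fin n → ℝ) : Prop :=
  ∀ f g : Vec n → ℝ, Sm f → Sm g → ∀ z : Cot n,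
    bkt W (fun y => f y.1) (fun y => g y.1) z = bktM w f g z.1

/-- Foliated function of the vertical foliation of `T*M`: constant on the fibers. -/
def FolV {n : ℕ} (F : Cot n → ℝ) : Prop := ∀ (x p p' : Vec n), F (x, p) = F (x, p')

/-- Transversal Poisson structure of the vertical foliation of `T*M`
(semi-Poisson structure): the bracket restricts to a Lie bracket on foliated functions. -/
def SemiPoissonT {n : ℕ} (W : Biv n) : Prop :=
  (∀ F G, Sm F → Sm G → FolV F → FolV G → FolV (bkt W F G)) ∧
  (∀ F G H, Sm F → Sm G → Sm H → FolV F → FolV G → FolV H → ∀ z,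
    bkt W (bkt W F G) H z + bkt W (bkt W G H) F z + bkt W (bkt W H F) G z = 0)

/-- The `w`-Hamiltonian vector field of `f` : `(X_f^w)^j = w^{ij} ∂_i f`. -/
def ham {n : ℕ} (w : Vec n → Fin n → Fin n → ℝ) (f : Vec n → ℝ) (x : Vec n) (j : Fin n) : ℝ :=
  ∑ i, w x i j * pd i f x

/-- Contravariant derivative of a vector field, with coefficients
`D_{dx^i} ∂_j = -Γ^{ik}_j ∂_k`, applied in the direction `df`:
`(D_{df}X)^j = ∂_i f (w^{ib} ∂_b X^j - Γ^{ij}_k X^k)`. -/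
def Dvec {n : ℕ} (w : Vec n → Fin n → Fin n → ℝ) (Γ : Vec n → Fin n → Fin n → Fin n → ℝ)
    (f : Vec n → ℝ) (X : Vec n → Vec n) (x : Vec n) (j : Fin n) : ℝ :=
  ∑ i, pd i f x *
    ((∑ b, w x i b * pd b (fun y => X y j) x) - ∑ k, Γ x i j k * X x k)

/-- The extension of the contravariant derivative `D_{df}` to symmetric 2-tensor fields. -/
def Dten2 {n : ℕ} (w : Vec n → Fin n → Fin n → ℝ) (Γ : Vec n → Fin n → Fin n → Fin n → ℝ)
    (f : Vec n → ℝ) (G : Vec n → Fin n → Fin n → ℝ) (x : Vec n) (i j : Fin n) : ℝ :=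
  (∑ a, ∑ b, w x a b * pd a f x * pd b (fun y => G y i j) x)
   - (∑ a, ∑ h, pd a f x * Γ x a i h * G x h j)
   - (∑ a, ∑ h, pd a f x * Γ x a j h * G x i h)

def SmoothVF {n : ℕ} (X : Vec n → Vec n) : Prop := ∀ i, Sm fun x => X x i
def SmoothGam {n : ℕ} (Γ : Vec n → Fin n → Fin n → Fin n → ℝ) : Prop :=
  ∀ i j k, Sm fun x => Γ x i j k

/-- The horizontal derivative `δ/δx^i = ∂/∂x^i - N_{ia} ∂/∂p_a` of a nonlinear connection
with coefficients `N`. -/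
def delx {n : ℕ} (N : Cot n → Fin n → Fin n → ℝ) (i : Fin n) (F : Cot n → ℝ) (z : Cot n) : ℝ :=
  Dxx i F z - ∑ a, N z i a * Dpp a F z

/-- The curvature `R_{kij} = δN_{kj}/δx^i - δN_{ki}/δx^j` of the nonlinear connection. -/
def curvN {n : ℕ} (N : Cot n → Fin n → Fin n → ℝ) (z : Cot n) (k i j : Fin n) : ℝ :=
  delx N i (fun y => N y k j) z - delx N j (fun y => N y k i) z

/-- The horizontal lift `w^H = (1/2) w^{ij} δ/δx^i ∧ δ/δx^j`, in natural coordinates. -/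
def WH {n : ℕ} (w : Vec n → Fin n → Fin n → ℝ) (N : Cot n → Fin n → Fin n → ℝ) : Biv n :=
  fun z a b =>
    match a, b with
    | Sum.inl i, Sum.inl j => w z.1 i j
    | Sum.inl i, Sum.inr b => -∑ j, w z.1 i j * N z j b
    | Sum.inr a, Sum.inl j => ∑ i, w z.1 j i * N z i a
    | Sum.inr a, Sum.inr b => ∑ i, ∑ j, w z.1 i j * N z i a * N z j b

-- ====== generic calculus layer ======
section Generic
variable {E : Type*} [NormedAddCommGroup E] [NormedSpace ℝ E]

/-- Internal smoothness: `C^∞`. -/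
def SmC (f : E → ℝ) : Prop := ContDiff ℝ (⊤ : ℕ∞) f

lemma Sm.smC {f : E → ℝ} (hf : Sm f) : SmC f := hf.of_le (by simp)

lemma SmC.diffAt {f : E → ℝ} (hf : SmC f) (x : E) : DifferentiableAt ℝ f x :=
  (hf.differentiable (by simp)).differentiableAt

lemma SmC.mul {f g : E → ℝ} (hf : SmC f) (hg : SmC g) : SmC fun x => f x * g x := ContDiff.mul hf hg

lemma SmC.neg {f : E → ℝ} (hf : SmC f) : SmC fun x => -f x := ContDiff.neg hf

lemma SmC.sub {f g : E → ℝ} (hf : SmC f) (hg : SmC g) : SmC fun x => f x - g x := ContDiff.sub hf hg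

lemma SmC.sum {ι : Type*} {s : Finset ι} {f : ι → E → ℝ} (hf : ∀ i ∈ s, SmC (f i)) :
    SmC fun x => ∑ i ∈ s, f i x := ContDiff.sum hf

lemma SmC.fderiv_apply {f : E → ℝ} (hf : SmC f) (v : E) : SmC fun x => fderiv ℝ f x v := by
  have h1 := (contDiff_infty_iff_fderiv.mp hf).2
  exact (ContinuousLinearMap.apply ℝ ℝ v).contDiff.comp h1

lemma fd_const (c : ℝ) (x v : E) : fderiv ℝ (fun _ : E => c) x v = 0 := by
  rw [fderiv_fun_const]; simp

lemma fd_mul {f g : E → ℝ} (hf : DifferentiableAt ℝ f x) (hg : DifferentiableAt ℝ g x) (v : E) :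
    fderiv ℝ (fun y => f y * g y) x v = fderiv ℝ f x v * g x + f x * fderiv ℝ g x v := by
  rw [fderiv_fun_mul hf hg]; simp [ContinuousLinearMap.smul_apply]; ring

lemma fd_sum {ι : Type*} {s : Finset ι} {f : ι → E → ℝ} {x : E}
    (hf : ∀ i ∈ s, DifferentiableAt ℝ (f i) x) (v : E) :
    fderiv ℝ (fun y => ∑ i ∈ s, f i y) x v = ∑ i ∈ s, fderiv ℝ (f i) x v := by
  rw [fderiv_fun_sum hf]; simp

lemma fd_sub {f g : E → ℝ} (hf : DifferentiableAt ℝ f x) (hg : DifferentiableAt ℝ g x) (v : E) :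
    fderiv ℝ (fun y => f y - g y) x v = fderiv ℝ f x v - fderiv ℝ g x v := by
  rw [fderiv_fun_sub hf hg]; simp

lemma fd_symm {f : E → ℝ} (hf : SmC f) (x v u : E) :
    fderiv ℝ (fun y => fderiv ℝ f y v) x u = fderiv ℝ (fun y => fderiv ℝ f y u) x v := by
  have h1 : DifferentiableAt ℝ (fderiv ℝ f) x :=
    ((contDiff_infty_iff_fderiv.mp hf).2.differentiable (by simp)).differentiableAt
  rw [fderiv_clm_apply h1 (differentiableAt_const v), fderiv_clm_apply h1 (differentiableAt_const u)]
  simp only [ContinuousLinearMap.add_apply, ContinuousLinearMap.flip_apply,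
    ContinuousLinearMap.comp_apply, fderiv_fun_const, Pi.zero_apply, ContinuousLinearMap.zero_apply,
    ContinuousLinearMap.zero_comp, add_zero, zero_add, map_zero]
  have hsym := (hf.contDiffAt (x := x)).isSymmSndFDerivAt (n := ((⊤:ℕ∞) : WithTop ℕ∞))
    (by rw [minSmoothness_of_isRCLikeNormedField, show ((2:WithTop ℕ∞)) = ((2:ℕ∞):WithTop ℕ∞) from rfl, WithTop.coe_le_coe]; exact le_top)
  exact hsym u v

end Generic

-- ====== DT / pd layer ======
variable {n : ℕ}

lemma DT_mul {F G : Cot n → ℝ} {z : Cot n} (hF : DifferentiableAt ℝ F z)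
    (hG : DifferentiableAt ℝ G z) (a : Idx n) :
    DT a (fun y => F y * G y) z = DT a F z * G z + F z * DT a G z := fd_mul hF hG _

lemma DT_sum {ι : Type*} {s : Finset ι} {F : ι → Cot n → ℝ} {z : Cot n}
    (hF : ∀ i ∈ s, DifferentiableAt ℝ (F i) z) (a : Idx n) :
    DT a (fun y => ∑ i ∈ s, F i y) z = ∑ i ∈ s, DT a (F i) z := fd_sum hF _

lemma DT_sub {F G : Cot n → ℝ} {z : Cot n} (hF : DifferentiableAt ℝ F z)
    (hG : DifferentiableAt ℝ G z) (a : Idx n) :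
    DT a (fun y => F y - G y) z = DT a F z - DT a G z := fd_sub hF hG _

lemma DT_symm {F : Cot n → ℝ} (hF : SmC F) (z : Cot n) (a b : Idx n) :
    DT a (fun y => DT b F y) z = DT b (fun y => DT a F y) z := fd_symm hF z _ _

/-- base coordinate function as CLM -/
lemma smc_coord1 (i : Fin n) : SmC fun z : Cot n => z.1 i :=
  ((ContinuousLinearMap.proj i : Vec n →L[ℝ] ℝ).comp
    (ContinuousLinearMap.fst ℝ (Vec n) (Vec n))).contDiff

lemma sm_coord1 (i : Fin n) : Sm fun z : Cot n => z.1 i :=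
  ((ContinuousLinearMap.proj i : Vec n →L[ℝ] ℝ).comp
    (ContinuousLinearMap.fst ℝ (Vec n) (Vec n))).contDiff

lemma sm_coord2 (i : Fin n) : Sm fun z : Cot n => z.2 i :=
  ((ContinuousLinearMap.proj i : Vec n →L[ℝ] ℝ).comp
    (ContinuousLinearMap.snd ℝ (Vec n) (Vec n))).contDiff

lemma smc_base {f : Vec n → ℝ} (hf : SmC f) : SmC fun z : Cot n => f z.1 :=
  hf.comp contDiff_fst

lemma DT_base {f : Vec n → ℝ} {z : Cot n} (hf : DifferentiableAt ℝ f z.1) (a : Idx n) :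
    DT a (fun y : Cot n => f y.1) z =
      (match a with | Sum.inl i => pd i f z.1 | Sum.inr _ => 0) := by
  have : (fun y : Cot n => f y.1) = f ∘ (Prod.fst) := rfl
  have hco : fderiv ℝ (fun y : Cot n => f y.1) z
      = (fderiv ℝ f z.1).comp (ContinuousLinearMap.fst ℝ (Vec n) (Vec n)) := by
    rw [this]
    rw [fderiv_comp z hf ((ContinuousLinearMap.fst ℝ (Vec n) (Vec n)).differentiableAt)]
    congr 1
    exact fderiv_fst
  unfold DT
  rw [hco]
  cases a with
  | inl i => simp [dirOf, pd]
  | inr i => simp [dirOf]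

lemma DT_coord1 (i : Fin n) (a : Idx n) (z : Cot n) :
    DT a (fun y : Cot n => y.1 i) z =
      (match a with | Sum.inl k => if i = k then (1:ℝ) else 0 | Sum.inr _ => (0:ℝ)) := by
  have h : (fun y : Cot n => y.1 i) = fun y : Cot n =>
      ((ContinuousLinearMap.proj i : Vec n →L[ℝ] ℝ).comp
        (ContinuousLinearMap.fst ℝ (Vec n) (Vec n))) y := rfl
  unfold DT
  rw [h, ContinuousLinearMap.fderiv]
  cases a with
  | inl k => simp [dirOf, Pi.single_apply]
  | inr k => simp [dirOf, Pi.single_apply]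

lemma DT_coord2 (i : Fin n) (a : Idx n) (z : Cot n) :
    DT a (fun y : Cot n => y.2 i) z =
      (match a with | Sum.inl _ => (0:ℝ) | Sum.inr k => if i = k then (1:ℝ) else 0) := by
  have h : (fun y : Cot n => y.2 i) = fun y : Cot n =>
      ((ContinuousLinearMap.proj i : Vec n →L[ℝ] ℝ).comp
        (ContinuousLinearMap.snd ℝ (Vec n) (Vec n))) y := rfl
  unfold DT
  rw [h, ContinuousLinearMap.fderiv]
  cases a with
  | inl k => simp [dirOf, Pi.single_apply]
  | inr k => simp [dirOf, Pi.single_apply]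

-- pd versions
lemma pd_mul {f g : Vec n → ℝ} {x : Vec n} (hf : DifferentiableAt ℝ f x)
    (hg : DifferentiableAt ℝ g x) (i : Fin n) :
    pd i (fun y => f y * g y) x = pd i f x * g x + f x * pd i g x := fd_mul hf hg _

lemma pd_sum {ι : Type*} {s : Finset ι} {f : ι → Vec n → ℝ} {x : Vec n}
    (hf : ∀ i ∈ s, DifferentiableAt ℝ (f i) x) (a : Fin n) :
    pd a (fun y => ∑ i ∈ s, f i y) x = ∑ i ∈ s, pd a (f i) x := fd_sum hf _

lemma pd_symm {f : Vec n → ℝ} (hf : SmC f) (x : Vec n) (i j : Fin n) :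
    pd i (fun y => pd j f y) x = pd j (fun y => pd i f y) x := fd_symm hf x _ _

lemma pd_coord (i j : Fin n) (x : Vec n) :
    pd i (fun y : Vec n => y j) x = if j = i then (1:ℝ) else 0 := by
  have h : (fun y : Vec n => y j) = fun y : Vec n =>
      (ContinuousLinearMap.proj j : Vec n →L[ℝ] ℝ) y := rfl
  unfold pd
  rw [h, ContinuousLinearMap.fderiv]
  simp [Pi.single_apply]

lemma sm_coordM (i : Fin n) : Sm fun x : Vec n => x i :=
  (ContinuousLinearMap.proj i : Vec n →L[ℝ] ℝ).contDiff

lemma pd_congr {f g : Vec n → ℝ} (h : ∀ x, f x = g x) (i : Fin n) (x : Vec n) :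
    pd i f x = pd i g x := by
  have : f = g := funext h
  rw [this]

-- ====== pure algebra layer ======
section Algebra
variable {n : ℕ}

lemma sum_swap2 (f : Fin n → Fin n → ℝ) :
    ∑ x, ∑ y, f x y = ∑ x, ∑ y, f y x := Finset.sum_comm

lemma sum_rot3 (f : Fin n → Fin n → Fin n → ℝ) :
    ∑ a, ∑ b, ∑ c, f a b c = ∑ a, ∑ b, ∑ c, f c a b := by
  rw [Finset.sum_comm]
  exact Finset.sum_congr rfl fun b _ => Finset.sum_comm

lemma sum_rot3' (f : Fin n → Fin n → Fin n → ℝ) :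
    ∑ a, ∑ b, ∑ c, f a b c = ∑ a, ∑ b, ∑ c, f b c a :=
  (sum_rot3 (fun a b c => f b c a)).symm

lemma sum_out3 (f : Fin n → Fin n → Fin n → ℝ) :
    ∑ x, ∑ y, ∑ b, f x y b = ∑ b, ∑ x, ∑ y, f x y b :=
  calc ∑ x, ∑ y, ∑ b, f x y b = ∑ x, ∑ b, ∑ y, f x y b :=
        Finset.sum_congr rfl fun x _ => Finset.sum_comm
  _ = ∑ b, ∑ x, ∑ y, f x y b := Finset.sum_comm

/-- the half-trick for contracting an antisymmetric coefficient with second derivatives -/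
lemma half_trick (C uu r : Fin n → Fin n → ℝ)
    (hC : ∀ k i, C i k = -C k i)
    (huu : ∀ k i, uu k i - uu i k = r k i) :
    ∑ k, ∑ i, C k i * uu k i = (1/2) * ∑ k, ∑ i, C k i * r k i := by
  have h1 : ∑ k, ∑ i, C k i * uu k i = ∑ k, ∑ i, -(C k i * uu i k) := by
    rw [sum_swap2]
    exact Finset.sum_congr rfl fun k _ => Finset.sum_congr rfl fun i _ => by
      rw [hC]; ring
  have h2 : (∑ k, ∑ i, C k i * uu k i) + (∑ k, ∑ i, C k i * uu k i)
      = ∑ k, ∑ i, C k i * r k i := by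
    nth_rewrite 2 [h1]
    rw [← Finset.sum_add_distrib]
    refine Finset.sum_congr rfl fun k _ => ?_
    rw [← Finset.sum_add_distrib]
    refine Finset.sum_congr rfl fun i _ => ?_
    rw [← huu]; ring
  linarith

/-- second-order pair lemma -/
lemma pairU (a : Fin n → Fin n → ℝ) (r : Fin n → Fin n → Fin n → ℝ)
    (ha : ∀ i j, a j i = -a i j) (hr : ∀ b k i, r b i k = -r b k i)
    (v t ub : Fin n → ℝ) (uu : Fin n → Fin n → ℝ)
    (hu : ∀ k i, uu k i - uu i k = -∑ b, r b k i * ub b) :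
    (∑ k, ∑ l, ∑ i, ∑ j, a k l * a i j * uu k i * v j * t l)
      + (∑ k, ∑ l, ∑ i, ∑ j, a k l * a i j * t i * uu k j * v l)
    = -∑ b, ∑ j, ∑ l, (∑ k, ∑ i, a k l * a i j * r b k i) * (ub b * v j * t l) := by
  have hU2 : (∑ k, ∑ l, ∑ i, ∑ j, a k l * a i j * t i * uu k j * v l)
      = ∑ k, ∑ l, ∑ i, ∑ j, a k j * a l i * uu k i * v j * t l := by
    refine Finset.sum_congr rfl fun k _ => ?_
    calc (∑ l, ∑ i, ∑ j, a k l * a i j * t i * uu k j * v l)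
        = ∑ l, ∑ i, ∑ j, a k j * a l i * t l * uu k i * v j :=
          sum_rot3 (fun l i j => a k l * a i j * t i * uu k j * v l)
      _ = ∑ l, ∑ i, ∑ j, a k j * a l i * uu k i * v j * t l :=
        Finset.sum_congr rfl fun l _ => Finset.sum_congr rfl fun i _ =>
          Finset.sum_congr rfl fun j _ => by ring
  rw [hU2, ← Finset.sum_add_distrib]
  have hcomb : ∀ k, ((∑ l, ∑ i, ∑ j, a k l * a i j * uu k i * v j * t l)
      + ∑ l, ∑ i, ∑ j, a k j * a l i * uu k i * v j * t l)
      = ∑ l, ∑ i, ∑ j, (a k l * a i j + a k j * a l i) * uu k i * v j * t l := by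
    intro k
    rw [← Finset.sum_add_distrib]
    refine Finset.sum_congr rfl fun l _ => ?_
    rw [← Finset.sum_add_distrib]
    refine Finset.sum_congr rfl fun i _ => ?_
    rw [← Finset.sum_add_distrib]
    exact Finset.sum_congr rfl fun j _ => by ring
  simp only [hcomb]
  have hre : (∑ k, ∑ l, ∑ i, ∑ j, (a k l * a i j + a k j * a l i) * uu k i * v j * t l)
      = ∑ j, ∑ l, ∑ k, ∑ i, (a k l * a i j + a k j * a l i) * uu k i * v j * t l := by
    calc (∑ k, ∑ l, ∑ i, ∑ j, (a k l * a i j + a k j * a l i) * uu k i * v j * t l)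
        = ∑ k, ∑ j, ∑ l, ∑ i, (a k l * a i j + a k j * a l i) * uu k i * v j * t l :=
          Finset.sum_congr rfl fun k _ =>
            sum_rot3' (fun l i j => (a k l * a i j + a k j * a l i) * uu k i * v j * t l)
      _ = ∑ j, ∑ k, ∑ l, ∑ i, (a k l * a i j + a k j * a l i) * uu k i * v j * t l :=
          Finset.sum_comm
      _ = ∑ j, ∑ l, ∑ k, ∑ i, (a k l * a i j + a k j * a l i) * uu k i * v j * t l :=
          Finset.sum_congr rfl fun j _ => Finset.sum_comm
  rw [hre]
  have hinner : ∀ j l, (∑ k, ∑ i, (a k l * a i j + a k j * a l i) * uu k i * v j * t l)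
      = (-∑ b, (∑ k, ∑ i, a k l * a i j * r b k i) * ub b) * (v j * t l) := by
    intro j l
    have e1 : (∑ k, ∑ i, (a k l * a i j + a k j * a l i) * uu k i * v j * t l)
        = (∑ k, ∑ i, (a k l * a i j + a k j * a l i) * uu k i) * (v j * t l) := by
      rw [Finset.sum_mul]
      refine Finset.sum_congr rfl fun k _ => ?_
      rw [Finset.sum_mul]
      exact Finset.sum_congr rfl fun i _ => by ring
    rw [e1]
    have e2 : (∑ k, ∑ i, (a k l * a i j + a k j * a l i) * uu k i)
        = (1/2) * ∑ k, ∑ i, (a k l * a i j + a k j * a l i) * (-∑ b, r b k i * ub b) :=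
      half_trick _ uu _
        (fun k i => by
          show a i l * a k j + a i j * a l k = -(a k l * a i j + a k j * a l i)
          rw [ha l i, ha k l]; ring) hu
    rw [e2]
    have s1 : (∑ k, ∑ i, (a k l * a i j + a k j * a l i) * (-∑ b, r b k i * ub b))
        = (∑ k, ∑ i, a k l * a i j * (-∑ b, r b k i * ub b))
          + (∑ k, ∑ i, a k j * a l i * (-∑ b, r b k i * ub b)) := by
      rw [← Finset.sum_add_distrib]
      refine Finset.sum_congr rfl fun k _ => ?_
      rw [← Finset.sum_add_distrib]
      exact Finset.sum_congr rfl fun i _ => by ring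
    have s2 : (∑ k, ∑ i, a k j * a l i * (-∑ b, r b k i * ub b))
        = ∑ k, ∑ i, a k l * a i j * (-∑ b, r b k i * ub b) := by
      rw [sum_swap2]
      refine Finset.sum_congr rfl fun k _ => Finset.sum_congr rfl fun i _ => ?_
      rw [ha k l]
      have hx : (∑ b, r b i k * ub b) = -∑ b, r b k i * ub b := by
        rw [← Finset.sum_neg_distrib]
        exact Finset.sum_congr rfl fun b _ => by rw [hr b k i]; ring
      rw [hx]; ring
    have s3 : (∑ k, ∑ i, a k l * a i j * (-∑ b, r b k i * ub b))
        = -∑ b, (∑ k, ∑ i, a k l * a i j * r b k i) * ub b := by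
      have e : ∀ k i : Fin n, a k l * a i j * (-∑ b, r b k i * ub b)
          = ∑ b, -(a k l * a i j * r b k i * ub b) := by
        intro k i
        rw [← Finset.sum_neg_distrib, Finset.mul_sum]
        exact Finset.sum_congr rfl fun b _ => by ring
      calc (∑ k, ∑ i, a k l * a i j * (-∑ b, r b k i * ub b))
          = ∑ k, ∑ i, ∑ b, -(a k l * a i j * r b k i * ub b) := by
            exact Finset.sum_congr rfl fun k _ => Finset.sum_congr rfl fun i _ => e k i
        _ = ∑ b, ∑ k, ∑ i, -(a k l * a i j * r b k i * ub b) :=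
            sum_out3 (fun k i b => -(a k l * a i j * r b k i * ub b))
        _ = -∑ b, (∑ k, ∑ i, a k l * a i j * r b k i) * ub b := by
            rw [← Finset.sum_neg_distrib]
            refine Finset.sum_congr rfl fun b _ => ?_
            rw [Finset.sum_mul, ← Finset.sum_neg_distrib]
            refine Finset.sum_congr rfl fun k _ => ?_
            rw [Finset.sum_mul, ← Finset.sum_neg_distrib]
    rw [s1, s2, s3]; ring
  calc (∑ j, ∑ l, ∑ k, ∑ i, (a k l * a i j + a k j * a l i) * uu k i * v j * t l)
      = ∑ j, ∑ l, (-∑ b, (∑ k, ∑ i, a k l * a i j * r b k i) * ub b) * (v j * t l) :=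
        Finset.sum_congr rfl fun j _ => Finset.sum_congr rfl fun l _ => hinner j l
    _ = ∑ j, ∑ l, ∑ b, -((∑ k, ∑ i, a k l * a i j * r b k i) * (ub b * v j * t l)) := by
        refine Finset.sum_congr rfl fun j _ => Finset.sum_congr rfl fun l _ => ?_
        rw [neg_mul, Finset.sum_mul, ← Finset.sum_neg_distrib]
        exact Finset.sum_congr rfl fun b _ => by ring
    _ = ∑ b, ∑ j, ∑ l, -((∑ k, ∑ i, a k l * a i j * r b k i) * (ub b * v j * t l)) :=
        sum_out3 _
    _ = -∑ b, ∑ j, ∑ l, (∑ k, ∑ i, a k l * a i j * r b k i) * (ub b * v j * t l) := by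
        rw [← Finset.sum_neg_distrib]
        refine Finset.sum_congr rfl fun b _ => ?_
        rw [← Finset.sum_neg_distrib]
        exact Finset.sum_congr rfl fun j _ => Finset.sum_neg_distrib _

end Algebra

section Algebra2
variable {n : ℕ}

/-- one cyclic term of the Jacobiator, in components -/
def Eexpr (a : Fin n → Fin n → ℝ) (da : Fin n → Fin n → Fin n → ℝ)
    (u v t : Fin n → ℝ) (uu vv : Fin n → Fin n → ℝ) : ℝ :=
  ∑ k, ∑ l, a k l *
    (∑ i, ∑ j, (da k i j * u i * v j + a i j * uu k i * v j + a i j * u i * vv k j)) * t l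

lemma sum4_add (f g : Fin n → Fin n → Fin n → Fin n → ℝ) :
    (∑ k, ∑ l, ∑ i, ∑ j, (f k l i j + g k l i j))
      = (∑ k, ∑ l, ∑ i, ∑ j, f k l i j) + (∑ k, ∑ l, ∑ i, ∑ j, g k l i j) := by
  rw [← Finset.sum_add_distrib]
  refine Finset.sum_congr rfl fun k _ => ?_
  rw [← Finset.sum_add_distrib]
  refine Finset.sum_congr rfl fun l _ => ?_
  rw [← Finset.sum_add_distrib]
  refine Finset.sum_congr rfl fun i _ => ?_
  rw [← Finset.sum_add_distrib]

lemma expandE (a : Fin n → Fin n → ℝ) (da : Fin n → Fin n → Fin n → ℝ)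
    (u v t : Fin n → ℝ) (uu vv : Fin n → Fin n → ℝ) :
    Eexpr a da u v t uu vv
      = (∑ k, ∑ l, ∑ i, ∑ j, a k l * da k i j * u i * v j * t l)
        + (∑ k, ∑ l, ∑ i, ∑ j, a k l * a i j * uu k i * v j * t l)
        + (∑ k, ∑ l, ∑ i, ∑ j, a k l * a i j * u i * vv k j * t l) := by
  unfold Eexpr
  have hkl : ∀ k l, a k l *
      (∑ i, ∑ j, (da k i j * u i * v j + a i j * uu k i * v j + a i j * u i * vv k j)) * t l
      = ∑ i, ∑ j, (a k l * da k i j * u i * v j * t l + a k l * a i j * uu k i * v j * t l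
          + a k l * a i j * u i * vv k j * t l) := by
    intro k l
    rw [Finset.mul_sum, Finset.sum_mul]
    refine Finset.sum_congr rfl fun i _ => ?_
    rw [Finset.mul_sum, Finset.sum_mul]
    exact Finset.sum_congr rfl fun j _ => by ring
  calc (∑ k, ∑ l, a k l *
      (∑ i, ∑ j, (da k i j * u i * v j + a i j * uu k i * v j + a i j * u i * vv k j)) * t l)
      = ∑ k, ∑ l, ∑ i, ∑ j, (a k l * da k i j * u i * v j * t l
          + a k l * a i j * uu k i * v j * t l + a k l * a i j * u i * vv k j * t l) :=
        Finset.sum_congr rfl fun k _ => Finset.sum_congr rfl fun l _ => hkl k l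
    _ = _ := by
        rw [sum4_add (fun k l i j => a k l * da k i j * u i * v j * t l
            + a k l * a i j * uu k i * v j * t l)
          (fun k l i j => a k l * a i j * u i * vv k j * t l),
          sum4_add (fun k l i j => a k l * da k i j * u i * v j * t l)
            (fun k l i j => a k l * a i j * uu k i * v j * t l)]

lemma Apart (a : Fin n → Fin n → ℝ) (da : Fin n → Fin n → Fin n → ℝ) (u v t : Fin n → ℝ) :
    (∑ k, ∑ l, ∑ i, ∑ j, a k l * da k i j * u i * v j * t l)
      + (∑ k, ∑ l, ∑ i, ∑ j, a k l * da k i j * v i * t j * u l)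
      + (∑ k, ∑ l, ∑ i, ∑ j, a k l * da k i j * t i * u j * v l)
    = ∑ i, ∑ j, ∑ l, (∑ k, (a k i * da k j l + a k j * da k l i + a k l * da k i j))
        * (u i * v j * t l) := by
  have hA2 : (∑ k, ∑ l, ∑ i, ∑ j, a k l * da k i j * v i * t j * u l)
      = ∑ k, ∑ l, ∑ i, ∑ j, a k i * da k j l * u i * v j * t l := by
    refine Finset.sum_congr rfl fun k _ => ?_
    calc (∑ l, ∑ i, ∑ j, a k l * da k i j * v i * t j * u l)
        = ∑ l, ∑ i, ∑ j, a k i * da k j l * v j * t l * u i :=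
          sum_rot3' (fun l i j => a k l * da k i j * v i * t j * u l)
      _ = _ := Finset.sum_congr rfl fun l _ => Finset.sum_congr rfl fun i _ =>
          Finset.sum_congr rfl fun j _ => by ring
  have hA3 : (∑ k, ∑ l, ∑ i, ∑ j, a k l * da k i j * t i * u j * v l)
      = ∑ k, ∑ l, ∑ i, ∑ j, a k j * da k l i * u i * v j * t l := by
    refine Finset.sum_congr rfl fun k _ => ?_
    calc (∑ l, ∑ i, ∑ j, a k l * da k i j * t i * u j * v l)
        = ∑ l, ∑ i, ∑ j, a k j * da k l i * t l * u i * v j :=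
          sum_rot3 (fun l i j => a k l * da k i j * t i * u j * v l)
      _ = _ := Finset.sum_congr rfl fun l _ => Finset.sum_congr rfl fun i _ =>
          Finset.sum_congr rfl fun j _ => by ring
  rw [hA2, hA3, ← Finset.sum_add_distrib, ← Finset.sum_add_distrib]
  have hmerge : ∀ k, ((∑ l, ∑ i, ∑ j, a k l * da k i j * u i * v j * t l)
        + (∑ l, ∑ i, ∑ j, a k i * da k j l * u i * v j * t l)
        + (∑ l, ∑ i, ∑ j, a k j * da k l i * u i * v j * t l))
      = ∑ l, ∑ i, ∑ j, (a k i * da k j l + a k j * da k l i + a k l * da k i j)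
          * (u i * v j * t l) := by
    intro k
    rw [← Finset.sum_add_distrib, ← Finset.sum_add_distrib]
    refine Finset.sum_congr rfl fun l _ => ?_
    rw [← Finset.sum_add_distrib, ← Finset.sum_add_distrib]
    refine Finset.sum_congr rfl fun i _ => ?_
    rw [← Finset.sum_add_distrib, ← Finset.sum_add_distrib]
    exact Finset.sum_congr rfl fun j _ => by ring
  -- LHS currently: ∑ k, (sum of three) ; rewrite pointwise then reorder
  calc (∑ k, ((∑ l, ∑ i, ∑ j, a k l * da k i j * u i * v j * t l)
        + (∑ l, ∑ i, ∑ j, a k i * da k j l * u i * v j * t l)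
        + (∑ l, ∑ i, ∑ j, a k j * da k l i * u i * v j * t l)))
      = ∑ k, ∑ l, ∑ i, ∑ j, (a k i * da k j l + a k j * da k l i + a k l * da k i j)
          * (u i * v j * t l) := Finset.sum_congr rfl fun k _ => hmerge k
    _ = ∑ l, ∑ k, ∑ i, ∑ j, (a k i * da k j l + a k j * da k l i + a k l * da k i j)
          * (u i * v j * t l) := Finset.sum_comm
    _ = ∑ l, ∑ i, ∑ j, ∑ k, (a k i * da k j l + a k j * da k l i + a k l * da k i j)
          * (u i * v j * t l) := Finset.sum_congr rfl fun l _ =>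
            sum_rot3 (fun k i j => (a k i * da k j l + a k j * da k l i + a k l * da k i j)
              * (u i * v j * t l))
    _ = ∑ i, ∑ j, ∑ l, ∑ k, (a k i * da k j l + a k j * da k l i + a k l * da k i j)
          * (u i * v j * t l) :=
          sum_rot3 (fun l i j => ∑ k, (a k i * da k j l + a k j * da k l i + a k l * da k i j)
              * (u i * v j * t l))
    _ = _ := by
          refine Finset.sum_congr rfl fun i _ => Finset.sum_congr rfl fun j _ =>
            Finset.sum_congr rfl fun l _ => ?_
          rw [Finset.sum_mul]

/-- THE algebraic Jacobiator formula -/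
lemma jac_algebra (a : Fin n → Fin n → ℝ) (da : Fin n → Fin n → Fin n → ℝ)
    (r : Fin n → Fin n → Fin n → ℝ)
    (ha : ∀ i j, a j i = -a i j) (hr : ∀ b k i, r b i k = -r b k i)
    (u v t ub vb tb : Fin n → ℝ) (uu vv tt : Fin n → Fin n → ℝ)
    (hu : ∀ k i, uu k i - uu i k = -∑ b, r b k i * ub b)
    (hv : ∀ k i, vv k i - vv i k = -∑ b, r b k i * vb b)
    (ht : ∀ k i, tt k i - tt i k = -∑ b, r b k i * tb b) :
    Eexpr a da u v t uu vv + Eexpr a da v t u vv tt + Eexpr a da t u v tt uu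
    = (∑ i, ∑ j, ∑ l, (∑ k, (a k i * da k j l + a k j * da k l i + a k l * da k i j))
        * (u i * v j * t l))
      - ∑ b, ∑ j, ∑ l, (∑ k, ∑ i, a k l * a i j * r b k i)
          * (ub b * v j * t l + vb b * t j * u l + tb b * u j * v l) := by
  rw [expandE a da u v t uu vv, expandE a da v t u vv tt, expandE a da t u v tt uu]
  have hP1 := pairU a r ha hr v t ub uu hu
  have hP2 := pairU a r ha hr t u vb vv hv
  have hP3 := pairU a r ha hr u v tb tt ht
  have hA := Apart a da u v t
  have hsplit : (∑ b, ∑ j, ∑ l, (∑ k, ∑ i, a k l * a i j * r b k i)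
          * (ub b * v j * t l + vb b * t j * u l + tb b * u j * v l))
      = (∑ b, ∑ j, ∑ l, (∑ k, ∑ i, a k l * a i j * r b k i) * (ub b * v j * t l))
        + (∑ b, ∑ j, ∑ l, (∑ k, ∑ i, a k l * a i j * r b k i) * (vb b * t j * u l))
        + (∑ b, ∑ j, ∑ l, (∑ k, ∑ i, a k l * a i j * r b k i) * (tb b * u j * v l)) := by
    rw [← Finset.sum_add_distrib, ← Finset.sum_add_distrib]
    refine Finset.sum_congr rfl fun b _ => ?_
    rw [← Finset.sum_add_distrib, ← Finset.sum_add_distrib]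
    refine Finset.sum_congr rfl fun j _ => ?_
    rw [← Finset.sum_add_distrib, ← Finset.sum_add_distrib]
    exact Finset.sum_congr rfl fun l _ => by ring
  rw [hsplit]
  linarith [hP1, hP2, hP3, hA]

-- ====== delx calculus ======
section Delx
variable {n : ℕ} {N : Cot n → Fin n → Fin n → ℝ} {F G : Cot n → ℝ}

lemma smc_DT (hF : SmC F) (a : Idx n) : SmC fun z => DT a F z := hF.fderiv_apply _

lemma delx_def (i : Fin n) (F : Cot n → ℝ) (z : Cot n) :
    delx N i F z = DT (Sum.inl i) F z - ∑ a, N z i a * DT (Sum.inr a) F z := rfl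

lemma delx_fun (i : Fin n) (F : Cot n → ℝ) :
    delx N i F = fun z => DT (Sum.inl i) F z - ∑ a, N z i a * DT (Sum.inr a) F z := rfl

lemma smc_delx (hN : ∀ k l, SmC fun z => N z k l) (hF : SmC F) (i : Fin n) :
    SmC (delx N i F) := by
  rw [delx_fun]
  exact (smc_DT hF _).sub (SmC.sum fun a _ => (hN i a).mul (smc_DT hF _))

lemma delx_mul {z : Cot n} (hF : DifferentiableAt ℝ F z) (hG : DifferentiableAt ℝ G z)
    (i : Fin n) :
    delx N i (fun y => F y * G y) z = delx N i F z * G z + F z * delx N i G z := by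
  rw [delx_def, delx_def, delx_def]
  rw [DT_mul hF hG (Sum.inl i)]
  have h1 : ∀ a : Fin n, N z i a * DT (Sum.inr a) (fun y => F y * G y) z
      = N z i a * (DT (Sum.inr a) F z * G z + F z * DT (Sum.inr a) G z) := fun a => by
    rw [DT_mul hF hG (Sum.inr a)]
  rw [Finset.sum_congr rfl fun a _ => h1 a]
  have h2 : ∑ a, N z i a * (DT (Sum.inr a) F z * G z + F z * DT (Sum.inr a) G z)
      = (∑ a, N z i a * DT (Sum.inr a) F z) * G z + F z * (∑ a, N z i a * DT (Sum.inr a) G z) := by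
    rw [Finset.sum_mul, Finset.mul_sum, ← Finset.sum_add_distrib]
    exact Finset.sum_congr rfl fun a _ => by ring
  rw [h2]; ring

lemma delx_sum {ι : Type*} {s : Finset ι} {F : ι → Cot n → ℝ} {z : Cot n}
    (hF : ∀ m ∈ s, DifferentiableAt ℝ (F m) z) (i : Fin n) :
    delx N i (fun y => ∑ m ∈ s, F m y) z = ∑ m ∈ s, delx N i (F m) z := by
  rw [delx_def]
  rw [DT_sum hF (Sum.inl i)]
  have h1 : ∀ a : Fin n, N z i a * DT (Sum.inr a) (fun y => ∑ m ∈ s, F m y) z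
      = ∑ m ∈ s, N z i a * DT (Sum.inr a) (F m) z := fun a => by
    rw [DT_sum hF (Sum.inr a), Finset.mul_sum]
  rw [Finset.sum_congr rfl fun a _ => h1 a, Finset.sum_comm, ← Finset.sum_sub_distrib]
  exact Finset.sum_congr rfl fun m _ => rfl

lemma delx_base {f : Vec n → ℝ} {z : Cot n} (hf : DifferentiableAt ℝ f z.1) (i : Fin n) :
    delx N i (fun y : Cot n => f y.1) z = pd i f z.1 := by
  rw [delx_def]
  rw [DT_base hf (Sum.inl i)]
  have h1 : ∀ a : Fin n, DT (Sum.inr a) (fun y : Cot n => f y.1) z = 0 := fun a =>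
    DT_base hf (Sum.inr a)
  simp only [h1, mul_zero, Finset.sum_const_zero, sub_zero]

lemma delx_coord1 {z : Cot n} (i c : Fin n) :
    delx N i (fun y : Cot n => y.1 c) z = if c = i then 1 else 0 := by
  rw [delx_def]
  rw [DT_coord1 c (Sum.inl i)]
  have h1 : ∀ a : Fin n, DT (Sum.inr a) (fun y : Cot n => y.1 c) z = 0 := fun a =>
    DT_coord1 c (Sum.inr a) z
  simp only [h1, mul_zero, Finset.sum_const_zero, sub_zero]

lemma delx_coord2 {z : Cot n} (i c : Fin n) :
    delx N i (fun y : Cot n => y.2 c) z = -N z i c := by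
  rw [delx_def]
  rw [DT_coord2 c (Sum.inl i)]
  have h1 : ∀ a : Fin n, DT (Sum.inr a) (fun y : Cot n => y.2 c) z
      = if c = a then 1 else 0 := fun a => DT_coord2 c (Sum.inr a) z
  simp only [h1, mul_ite, mul_one, mul_zero]
  rw [Finset.sum_ite_eq Finset.univ c (fun a => N z i a)]
  simp

lemma DT_delx (hN : ∀ k l, SmC fun z => N z k l) (hF : SmC F) (c : Idx n) (j : Fin n)
    (z : Cot n) :
    DT c (delx N j F) z
      = DT c (fun y => DT (Sum.inl j) F y) z
        - ∑ b, (DT c (fun y => N y j b) z * DT (Sum.inr b) F z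
            + N z j b * DT c (fun y => DT (Sum.inr b) F y) z) := by
  have h0 : (delx N j F)
      = fun y => DT (Sum.inl j) F y - ∑ b, N y j b * DT (Sum.inr b) F y := rfl
  rw [h0, DT_sub ((smc_DT hF _).diffAt z)
    ((SmC.sum fun b _ => (hN j b).mul (smc_DT hF _)).diffAt z) c]
  congr 1
  rw [DT_sum (fun b _ => (((hN j b).mul (smc_DT hF _)).diffAt z)) c]
  exact Finset.sum_congr rfl fun b _ =>
    DT_mul ((hN j b).diffAt z) ((smc_DT hF _).diffAt z) c

/-- abstract commutator algebra -/
lemma comm_algebra (Nv : Fin n → Fin n → ℝ) (Fb : Fin n → ℝ)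
    (P : Idx n → Idx n → ℝ) (Q : Idx n → Fin n → Fin n → ℝ)
    (hP : ∀ c d, P c d = P d c) (i j : Fin n) :
    ((P (Sum.inl i) (Sum.inl j)
        - ∑ b, (Q (Sum.inl i) j b * Fb b + Nv j b * P (Sum.inl i) (Sum.inr b)))
      - ∑ a, Nv i a * (P (Sum.inr a) (Sum.inl j)
        - ∑ b, (Q (Sum.inr a) j b * Fb b + Nv j b * P (Sum.inr a) (Sum.inr b))))
    - ((P (Sum.inl j) (Sum.inl i)
        - ∑ b, (Q (Sum.inl j) i b * Fb b + Nv i b * P (Sum.inl j) (Sum.inr b)))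
      - ∑ a, Nv j a * (P (Sum.inr a) (Sum.inl i)
        - ∑ b, (Q (Sum.inr a) i b * Fb b + Nv i b * P (Sum.inr a) (Sum.inr b))))
    = -∑ b, ((Q (Sum.inl i) j b - ∑ a, Nv i a * Q (Sum.inr a) j b)
        - (Q (Sum.inl j) i b - ∑ a, Nv j a * Q (Sum.inr a) i b)) * Fb b := by
  have hbsplit : ∀ x y : Fin n,
      (∑ b, (Q (Sum.inl x) y b * Fb b + Nv y b * P (Sum.inl x) (Sum.inr b)))
      = (∑ b, Q (Sum.inl x) y b * Fb b) + ∑ b, Nv y b * P (Sum.inl x) (Sum.inr b) :=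
    fun x y => Finset.sum_add_distrib
  have expand : ∀ x y : Fin n,
      (∑ a, Nv x a * (P (Sum.inr a) (Sum.inl y)
        - ∑ b, (Q (Sum.inr a) y b * Fb b + Nv y b * P (Sum.inr a) (Sum.inr b))))
      = (∑ a, Nv x a * P (Sum.inr a) (Sum.inl y))
        - (∑ a, ∑ b, Nv x a * (Q (Sum.inr a) y b * Fb b))
        - (∑ a, ∑ b, Nv x a * (Nv y b * P (Sum.inr a) (Sum.inr b))) := by
    intro x y
    rw [← Finset.sum_sub_distrib, ← Finset.sum_sub_distrib]
    refine Finset.sum_congr rfl fun a _ => ?_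
    rw [Finset.sum_add_distrib, mul_sub, mul_add, Finset.mul_sum, Finset.mul_sum]
    ring
  have cross : ∀ x y : Fin n,
      (∑ b, Nv y b * P (Sum.inl x) (Sum.inr b)) = ∑ a, Nv y a * P (Sum.inr a) (Sum.inl x) :=
    fun x y => Finset.sum_congr rfl fun b _ => by rw [hP]
  have dbl : (∑ a, ∑ b, Nv i a * (Nv j b * P (Sum.inr a) (Sum.inr b)))
      = ∑ a, ∑ b, Nv j a * (Nv i b * P (Sum.inr a) (Sum.inr b)) := by
    rw [sum_swap2 (fun a b => Nv i a * (Nv j b * P (Sum.inr a) (Sum.inr b)))]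
    exact Finset.sum_congr rfl fun a _ => Finset.sum_congr rfl fun b _ => by
      rw [hP (Sum.inr b) (Sum.inr a)]; ring
  have e5 : ∀ x y : Fin n, (∑ a, ∑ b, Nv x a * (Q (Sum.inr a) y b * Fb b))
      = ∑ b, (∑ a, Nv x a * Q (Sum.inr a) y b) * Fb b := by
    intro x y
    rw [Finset.sum_comm]
    refine Finset.sum_congr rfl fun b _ => ?_
    rw [Finset.sum_mul]
    exact Finset.sum_congr rfl fun a _ => by ring
  have hrhs : (∑ b, ((Q (Sum.inl i) j b - ∑ a, Nv i a * Q (Sum.inr a) j b)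
        - (Q (Sum.inl j) i b - ∑ a, Nv j a * Q (Sum.inr a) i b)) * Fb b)
      = (∑ b, Q (Sum.inl i) j b * Fb b) - (∑ b, (∑ a, Nv i a * Q (Sum.inr a) j b) * Fb b)
        - (∑ b, Q (Sum.inl j) i b * Fb b) + ∑ b, (∑ a, Nv j a * Q (Sum.inr a) i b) * Fb b := by
    rw [← Finset.sum_sub_distrib, ← Finset.sum_sub_distrib, ← Finset.sum_add_distrib]
    exact Finset.sum_congr rfl fun b _ => by ring
  rw [hbsplit i j, hbsplit j i, expand i j, expand j i, hrhs, cross i j, cross j i,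
    dbl, e5 i j, e5 j i, hP (Sum.inl i) (Sum.inl j)]
  ring

/-- the commutator of horizontal derivatives is the curvature -/
lemma delx_comm (hN : ∀ k l, SmC fun z => N z k l)
    (hNsym : ∀ z i j, N z i j = N z j i) (hF : SmC F) (i j : Fin n) (z : Cot n) :
    delx N i (delx N j F) z - delx N j (delx N i F) z
      = -∑ b, curvN N z b i j * DT (Sum.inr b) F z := by
  have hQsym : ∀ (c : Idx n) (x y : Fin n),
      DT c (fun z => N z x y) z = DT c (fun z => N z y x) z := by
    intro c x y
    congr 1
    exact funext fun z => hNsym z x y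
  have hL : ∀ x y : Fin n, delx N x (delx N y F) z
      = (DT (Sum.inl x) (fun w => DT (Sum.inl y) F w) z
          - ∑ b, (DT (Sum.inl x) (fun w => N w y b) z * DT (Sum.inr b) F z
              + N z y b * DT (Sum.inl x) (fun w => DT (Sum.inr b) F w) z))
        - ∑ a, N z x a * (DT (Sum.inr a) (fun w => DT (Sum.inl y) F w) z
          - ∑ b, (DT (Sum.inr a) (fun w => N w y b) z * DT (Sum.inr b) F z
              + N z y b * DT (Sum.inr a) (fun w => DT (Sum.inr b) F w) z)) := by
    intro x y
    rw [delx_def]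
    rw [DT_delx hN hF (Sum.inl x) y z]
    congr 1
    exact Finset.sum_congr rfl fun a _ => by rw [DT_delx hN hF (Sum.inr a) y z]
  have hcurv : ∀ b : Fin n, curvN N z b i j
      = (DT (Sum.inl i) (fun w => N w j b) z - ∑ a, N z i a * DT (Sum.inr a) (fun w => N w j b) z)
        - (DT (Sum.inl j) (fun w => N w i b) z
          - ∑ a, N z j a * DT (Sum.inr a) (fun w => N w i b) z) := by
    intro b
    unfold curvN
    rw [delx_def, delx_def]
    rw [hQsym (Sum.inl i) b j, hQsym (Sum.inl j) b i]
    have e1 : (∑ a, N z i a * DT (Sum.inr a) (fun y => N y b j) z)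
        = ∑ a, N z i a * DT (Sum.inr a) (fun w => N w j b) z :=
      Finset.sum_congr rfl fun a _ => by rw [hQsym (Sum.inr a) b j]
    have e2 : (∑ a, N z j a * DT (Sum.inr a) (fun y => N y b i) z)
        = ∑ a, N z j a * DT (Sum.inr a) (fun w => N w i b) z :=
      Finset.sum_congr rfl fun a _ => by rw [hQsym (Sum.inr a) b i]
    rw [e1, e2]
  rw [hL i j, hL j i]
  have h2 : (-∑ b, ((DT (Sum.inl i) (fun w => N w j b) z
          - ∑ a, N z i a * DT (Sum.inr a) (fun w => N w j b) z)
        - (DT (Sum.inl j) (fun w => N w i b) z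
          - ∑ a, N z j a * DT (Sum.inr a) (fun w => N w i b) z)) * DT (Sum.inr b) F z)
      = -∑ b, curvN N z b i j * DT (Sum.inr b) F z := by
    congr 1
    exact Finset.sum_congr rfl fun b _ => by rw [hcurv b]
  rw [← h2]
  exact comm_algebra (fun x y => N z x y) (fun b => DT (Sum.inr b) F z)
    (fun c d => DT c (fun w => DT d F w) z) (fun c x y => DT c (fun w => N w x y) z)
    (fun c d => DT_symm hF z c d) i j

end Delx

-- ====== bracket of the horizontal lift, master formula ======
section Master
variable {n : ℕ} {w : Vec n → Fin n → Fin n → ℝ} {N : Cot n → Fin n → Fin n → ℝ}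
  {F G H : Cot n → ℝ}

lemma sum2_add (f g : Fin n → Fin n → ℝ) :
    (∑ i, ∑ j, (f i j + g i j)) = (∑ i, ∑ j, f i j) + ∑ i, ∑ j, g i j := by
  rw [← Finset.sum_add_distrib]
  exact Finset.sum_congr rfl fun i _ => Finset.sum_add_distrib

lemma sum_swap13 (f : Fin n → Fin n → Fin n → ℝ) :
    ∑ a, ∑ b, ∑ c, f a b c = ∑ a, ∑ b, ∑ c, f c b a := by
  calc ∑ a, ∑ b, ∑ c, f a b c = ∑ b, ∑ a, ∑ c, f a b c := Finset.sum_comm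
    _ = ∑ b, ∑ c, ∑ a, f a b c := Finset.sum_congr rfl fun b _ => Finset.sum_comm
    _ = ∑ c, ∑ b, ∑ a, f a b c := Finset.sum_comm

lemma sum4_pairswap (f : Fin n → Fin n → Fin n → Fin n → ℝ) :
    ∑ a, ∑ b, ∑ i, ∑ j, f a b i j = ∑ i, ∑ j, ∑ a, ∑ b, f a b i j := by
  calc ∑ a, ∑ b, ∑ i, ∑ j, f a b i j
      = ∑ a, ∑ i, ∑ b, ∑ j, f a b i j := Finset.sum_congr rfl fun a _ => Finset.sum_comm
    _ = ∑ i, ∑ a, ∑ b, ∑ j, f a b i j := Finset.sum_comm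
    _ = ∑ i, ∑ a, ∑ j, ∑ b, f a b i j :=
        Finset.sum_congr rfl fun i _ => Finset.sum_congr rfl fun a _ => Finset.sum_comm
    _ = ∑ i, ∑ j, ∑ a, ∑ b, f a b i j := Finset.sum_congr rfl fun i _ => Finset.sum_comm

/-- the bracket of the horizontal lift, in the adapted frame -/
lemma bkt_WH (hsk : SkewM w) (z : Cot n) :
    bkt (WH w N) F G z = ∑ i, ∑ j, w z.1 i j * delx N i F z * delx N j G z := by
  have hpt : ∀ i j, w z.1 i j * delx N i F z * delx N j G z
      = w z.1 i j * DT (Sum.inl i) F z * DT (Sum.inl j) G z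
        + (∑ b, -(w z.1 i j * N z j b * DT (Sum.inl i) F z * DT (Sum.inr b) G z))
        + (∑ a, -(w z.1 i j * N z i a * DT (Sum.inr a) F z * DT (Sum.inl j) G z))
        + (∑ a, ∑ b, w z.1 i j * N z i a * N z j b
            * DT (Sum.inr a) F z * DT (Sum.inr b) G z) := by
    intro i j
    rw [delx_def, delx_def]
    have h2 : -(w z.1 i j * DT (Sum.inl i) F z * (∑ b, N z j b * DT (Sum.inr b) G z))
        = ∑ b, -(w z.1 i j * N z j b * DT (Sum.inl i) F z * DT (Sum.inr b) G z) := by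
      rw [Finset.mul_sum, ← Finset.sum_neg_distrib]
      exact Finset.sum_congr rfl fun b _ => by ring
    have h3 : -(w z.1 i j * (∑ a, N z i a * DT (Sum.inr a) F z) * DT (Sum.inl j) G z)
        = ∑ a, -(w z.1 i j * N z i a * DT (Sum.inr a) F z * DT (Sum.inl j) G z) := by
      rw [Finset.mul_sum, Finset.sum_mul, ← Finset.sum_neg_distrib]
      exact Finset.sum_congr rfl fun a _ => by ring
    have h4 : w z.1 i j * (∑ a, N z i a * DT (Sum.inr a) F z)
          * (∑ b, N z j b * DT (Sum.inr b) G z)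
        = ∑ a, ∑ b, w z.1 i j * N z i a * N z j b
            * DT (Sum.inr a) F z * DT (Sum.inr b) G z := by
      rw [mul_assoc, Finset.sum_mul_sum, Finset.mul_sum]
      refine Finset.sum_congr rfl fun a _ => ?_
      rw [Finset.mul_sum]
      exact Finset.sum_congr rfl fun b _ => by ring
    rw [← h2, ← h3, ← h4]
    ring
  have hrhs : (∑ i, ∑ j, w z.1 i j * delx N i F z * delx N j G z)
      = (∑ i, ∑ j, w z.1 i j * DT (Sum.inl i) F z * DT (Sum.inl j) G z)
        + (∑ i, ∑ j, ∑ b, -(w z.1 i j * N z j b * DT (Sum.inl i) F z * DT (Sum.inr b) G z))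
        + (∑ i, ∑ j, ∑ a, -(w z.1 i j * N z i a * DT (Sum.inr a) F z * DT (Sum.inl j) G z))
        + (∑ i, ∑ j, ∑ a, ∑ b, w z.1 i j * N z i a * N z j b
            * DT (Sum.inr a) F z * DT (Sum.inr b) G z) := by
    rw [Finset.sum_congr rfl fun i (_ : i ∈ Finset.univ) =>
      Finset.sum_congr rfl fun j (_ : j ∈ Finset.univ) => hpt i j]
    rw [sum2_add, sum2_add, sum2_add]
  rw [hrhs]
  unfold bkt
  rw [Fintype.sum_sum_type]
  have hin : ∀ a : Idx n, (∑ b : Idx n, WH w N z a b * DT a F z * DT b G z)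
      = (∑ j, WH w N z a (Sum.inl j) * DT a F z * DT (Sum.inl j) G z)
        + ∑ b, WH w N z a (Sum.inr b) * DT a F z * DT (Sum.inr b) G z := fun a =>
    Fintype.sum_sum_type _
  rw [Finset.sum_congr rfl fun a (_ : a ∈ Finset.univ) => hin (Sum.inl a),
    Finset.sum_congr rfl fun a (_ : a ∈ Finset.univ) => hin (Sum.inr a)]
  rw [Finset.sum_add_distrib, Finset.sum_add_distrib]
  have hb1 : (∑ i, ∑ j, WH w N z (Sum.inl i) (Sum.inl j) * DT (Sum.inl i) F z
        * DT (Sum.inl j) G z)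
      = ∑ i, ∑ j, w z.1 i j * DT (Sum.inl i) F z * DT (Sum.inl j) G z := rfl
  have hb2 : (∑ i, ∑ b, WH w N z (Sum.inl i) (Sum.inr b) * DT (Sum.inl i) F z
        * DT (Sum.inr b) G z)
      = ∑ i, ∑ j, ∑ b, -(w z.1 i j * N z j b * DT (Sum.inl i) F z * DT (Sum.inr b) G z) := by
    refine Finset.sum_congr rfl fun i _ => ?_
    rw [Finset.sum_comm]
    refine Finset.sum_congr rfl fun b _ => ?_
    show (-∑ j, w z.1 i j * N z j b) * DT (Sum.inl i) F z * DT (Sum.inr b) G z = _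
    rw [neg_mul, neg_mul, Finset.sum_mul, Finset.sum_mul, ← Finset.sum_neg_distrib]
  have hb3 : (∑ a, ∑ j, WH w N z (Sum.inr a) (Sum.inl j) * DT (Sum.inr a) F z
        * DT (Sum.inl j) G z)
      = ∑ i, ∑ j, ∑ a, -(w z.1 i j * N z i a * DT (Sum.inr a) F z * DT (Sum.inl j) G z) := by
    have hflat : (∑ a, ∑ j, WH w N z (Sum.inr a) (Sum.inl j) * DT (Sum.inr a) F z
          * DT (Sum.inl j) G z)
        = ∑ a, ∑ j, ∑ i, -(w z.1 i j * N z i a * DT (Sum.inr a) F z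
            * DT (Sum.inl j) G z) := by
      refine Finset.sum_congr rfl fun a _ => Finset.sum_congr rfl fun j _ => ?_
      show (∑ i, w z.1 j i * N z i a) * DT (Sum.inr a) F z * DT (Sum.inl j) G z = _
      rw [Finset.sum_mul, Finset.sum_mul]
      exact Finset.sum_congr rfl fun i _ => by rw [hsk z.1 j i]; ring
    rw [hflat]
    exact sum_swap13 (fun a j i => -(w z.1 i j * N z i a * DT (Sum.inr a) F z
      * DT (Sum.inl j) G z))
  have hb4 : (∑ a, ∑ b, WH w N z (Sum.inr a) (Sum.inr b) * DT (Sum.inr a) F z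
        * DT (Sum.inr b) G z)
      = ∑ i, ∑ j, ∑ a, ∑ b, w z.1 i j * N z i a * N z j b
          * DT (Sum.inr a) F z * DT (Sum.inr b) G z := by
    have hflat : (∑ a, ∑ b, WH w N z (Sum.inr a) (Sum.inr b) * DT (Sum.inr a) F z
          * DT (Sum.inr b) G z)
        = ∑ a, ∑ b, ∑ i, ∑ j, w z.1 i j * N z i a * N z j b
            * DT (Sum.inr a) F z * DT (Sum.inr b) G z := by
      refine Finset.sum_congr rfl fun a _ => Finset.sum_congr rfl fun b _ => ?_
      show (∑ i, ∑ j, w z.1 i j * N z i a * N z j b) * DT (Sum.inr a) F z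
          * DT (Sum.inr b) G z = _
      rw [Finset.sum_mul, Finset.sum_mul]
      refine Finset.sum_congr rfl fun i _ => ?_
      rw [Finset.sum_mul, Finset.sum_mul]
    rw [hflat]
    exact sum4_pairswap (fun a b i j => w z.1 i j * N z i a * N z j b
      * DT (Sum.inr a) F z * DT (Sum.inr b) G z)
  rw [hb2, hb3, hb4]
  rw [hb1]
  ring

/-- horizontal derivative of the bracket -/
lemma delx_bkt (hsk : SkewM w) (hw : ∀ i j, SmC fun x => w x i j)
    (hN : ∀ k l, SmC fun z => N z k l) (hF : SmC F) (hG : SmC G) (k : Fin n) (z : Cot n) :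
    delx N k (bkt (WH w N) F G) z
      = ∑ i, ∑ j, (pd k (fun x => w x i j) z.1 * delx N i F z * delx N j G z
          + w z.1 i j * delx N k (delx N i F) z * delx N j G z
          + w z.1 i j * delx N i F z * delx N k (delx N j G) z) := by
  have hfun : bkt (WH w N) F G
      = fun y => ∑ i, ∑ j, (fun y' => w y'.1 i j * delx N i F y' * delx N j G y') y :=
    funext fun y => bkt_WH hsk y
  have hsm : ∀ i j : Fin n, SmC fun y : Cot n => w y.1 i j * delx N i F y * delx N j G y :=
    fun i j => ((smc_base (hw i j)).mul (smc_delx hN hF i)).mul (smc_delx hN hG j)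
  rw [hfun]
  rw [delx_sum (fun i _ => (SmC.sum fun j _ => (hsm i j)).diffAt z) k]
  refine Finset.sum_congr rfl fun i _ => ?_
  rw [delx_sum (fun j _ => (hsm i j).diffAt z) k]
  refine Finset.sum_congr rfl fun j _ => ?_
  have hAB : DifferentiableAt ℝ (fun y : Cot n => w y.1 i j * delx N i F y) z :=
    ((smc_base (hw i j)).mul (smc_delx hN hF i)).diffAt z
  rw [delx_mul hAB ((smc_delx hN hG j).diffAt z) k]
  rw [delx_mul ((smc_base (hw i j)).diffAt z) ((smc_delx hN hF i).diffAt z) k]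
  rw [delx_base ((hw i j).diffAt z.1) k]
  ring

/-- MASTER FORMULA for the Jacobiator of the horizontal lift -/
lemma master (hsk : SkewM w) (hw : ∀ i j, SmC fun x => w x i j)
    (hN : ∀ k l, SmC fun z => N z k l) (hNsym : ∀ z i j, N z i j = N z j i)
    (hF : SmC F) (hG : SmC G) (hH : SmC H) (z : Cot n) :
    bkt (WH w N) (bkt (WH w N) F G) H z + bkt (WH w N) (bkt (WH w N) G H) F z
      + bkt (WH w N) (bkt (WH w N) H F) G z
    = (∑ i, ∑ j, ∑ l, (∑ k, (w z.1 k i * pd k (fun x => w x j l) z.1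
          + w z.1 k j * pd k (fun x => w x l i) z.1
          + w z.1 k l * pd k (fun x => w x i j) z.1))
        * (delx N i F z * delx N j G z * delx N l H z))
      - ∑ b, ∑ j, ∑ l, (∑ k, ∑ i, w z.1 k l * w z.1 i j * curvN N z b k i)
          * (DT (Sum.inr b) F z * delx N j G z * delx N l H z
            + DT (Sum.inr b) G z * delx N j H z * delx N l F z
            + DT (Sum.inr b) H z * delx N j F z * delx N l G z) := by
  have e1 : bkt (WH w N) (bkt (WH w N) F G) H z
      = Eexpr (w z.1) (fun k i j => pd k (fun x => w x i j) z.1)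
          (delx N · F z) (delx N · G z) (delx N · H z)
          (fun k i => delx N k (delx N i F) z) (fun k i => delx N k (delx N i G) z) := by
    rw [bkt_WH hsk z]
    unfold Eexpr
    refine Finset.sum_congr rfl fun k _ => Finset.sum_congr rfl fun l _ => ?_
    rw [delx_bkt hsk hw hN hF hG k z]
  have e2 : bkt (WH w N) (bkt (WH w N) G H) F z
      = Eexpr (w z.1) (fun k i j => pd k (fun x => w x i j) z.1)
          (delx N · G z) (delx N · H z) (delx N · F z)
          (fun k i => delx N k (delx N i G) z) (fun k i => delx N k (delx N i H) z) := by
    rw [bkt_WH hsk z]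
    unfold Eexpr
    refine Finset.sum_congr rfl fun k _ => Finset.sum_congr rfl fun l _ => ?_
    rw [delx_bkt hsk hw hN hG hH k z]
  have e3 : bkt (WH w N) (bkt (WH w N) H F) G z
      = Eexpr (w z.1) (fun k i j => pd k (fun x => w x i j) z.1)
          (delx N · H z) (delx N · F z) (delx N · G z)
          (fun k i => delx N k (delx N i H) z) (fun k i => delx N k (delx N i F) z) := by
    rw [bkt_WH hsk z]
    unfold Eexpr
    refine Finset.sum_congr rfl fun k _ => Finset.sum_congr rfl fun l _ => ?_
    rw [delx_bkt hsk hw hN hH hF k z]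
  rw [e1, e2, e3]
  exact jac_algebra (w z.1) (fun k i j => pd k (fun x => w x i j) z.1)
    (fun b k i => curvN N z b k i)
    (fun i j => hsk z.1 j i)
    (fun b k i => by unfold curvN; ring)
    (delx N · F z) (delx N · G z) (delx N · H z)
    (fun b => DT (Sum.inr b) F z) (fun b => DT (Sum.inr b) G z) (fun b => DT (Sum.inr b) H z)
    (fun k i => delx N k (delx N i F) z) (fun k i => delx N k (delx N i G) z)
    (fun k i => delx N k (delx N i H) z)
    (fun k i => delx_comm hN hNsym hF k i z)
    (fun k i => delx_comm hN hNsym hG k i z)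
    (fun k i => delx_comm hN hNsym hH k i z)
end Master

-- ====== base manifold master formula ======
section BaseMaster
variable {n : ℕ} {w : Vec n → Fin n → Fin n → ℝ} {f g h : Vec n → ℝ}

lemma smc_pd {f : Vec n → ℝ} (hf : SmC f) (i : Fin n) : SmC fun x => pd i f x :=
  hf.fderiv_apply _

lemma pd_bktM (hw : ∀ i j, SmC fun x => w x i j) (hf : SmC f) (hg : SmC g)
    (k : Fin n) (x : Vec n) :
    pd k (bktM w f g) x
      = ∑ i, ∑ j, (pd k (fun y => w y i j) x * pd i f x * pd j g x
          + w x i j * pd k (fun y => pd i f y) x * pd j g x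
          + w x i j * pd i f x * pd k (fun y => pd j g y) x) := by
  have hsm : ∀ i j : Fin n, SmC fun y : Vec n => w y i j * pd i f y * pd j g y :=
    fun i j => ((hw i j).mul (smc_pd hf i)).mul (smc_pd hg j)
  have hfun : bktM w f g = fun y => ∑ i, ∑ j, (fun y' => w y' i j * pd i f y' * pd j g y') y :=
    rfl
  rw [hfun]
  rw [pd_sum (fun i _ => (SmC.sum fun j _ => (hsm i j)).diffAt x) k]
  refine Finset.sum_congr rfl fun i _ => ?_
  rw [pd_sum (fun j _ => (hsm i j).diffAt x) k]
  refine Finset.sum_congr rfl fun j _ => ?_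
  have hAB : DifferentiableAt ℝ (fun y : Vec n => w y i j * pd i f y) x :=
    ((hw i j).mul (smc_pd hf i)).diffAt x
  rw [pd_mul hAB ((smc_pd hg j).diffAt x) k]
  rw [pd_mul ((hw i j).diffAt x) ((smc_pd hf i).diffAt x) k]
  ring

/-- master formula on the base -/
lemma masterM (hsk : SkewM w) (hw : ∀ i j, SmC fun x => w x i j)
    (hf : SmC f) (hg : SmC g) (hh : SmC h) (x : Vec n) :
    bktM w (bktM w f g) h x + bktM w (bktM w g h) f x + bktM w (bktM w h f) g x
    = ∑ i, ∑ j, ∑ l, (∑ k, (w x k i * pd k (fun y => w y j l) x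
          + w x k j * pd k (fun y => w y l i) x
          + w x k l * pd k (fun y => w y i j) x))
        * (pd i f x * pd j g x * pd l h x) := by
  have e1 : bktM w (bktM w f g) h x
      = Eexpr (w x) (fun k i j => pd k (fun y => w y i j) x)
          (fun i => pd i f x) (fun i => pd i g x) (fun i => pd i h x)
          (fun k i => pd k (fun y => pd i f y) x) (fun k i => pd k (fun y => pd i g y) x) := by
    show (∑ k, ∑ l, w x k l * pd k (bktM w f g) x * pd l h x) = _
    unfold Eexpr
    refine Finset.sum_congr rfl fun k _ => Finset.sum_congr rfl fun l _ => ?_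
    rw [pd_bktM hw hf hg k x]
  have e2 : bktM w (bktM w g h) f x
      = Eexpr (w x) (fun k i j => pd k (fun y => w y i j) x)
          (fun i => pd i g x) (fun i => pd i h x) (fun i => pd i f x)
          (fun k i => pd k (fun y => pd i g y) x) (fun k i => pd k (fun y => pd i h y) x) := by
    show (∑ k, ∑ l, w x k l * pd k (bktM w g h) x * pd l f x) = _
    unfold Eexpr
    refine Finset.sum_congr rfl fun k _ => Finset.sum_congr rfl fun l _ => ?_
    rw [pd_bktM hw hg hh k x]
  have e3 : bktM w (bktM w h f) g x
      = Eexpr (w x) (fun k i j => pd k (fun y => w y i j) x)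
          (fun i => pd i h x) (fun i => pd i f x) (fun i => pd i g x)
          (fun k i => pd k (fun y => pd i h y) x) (fun k i => pd k (fun y => pd i f y) x) := by
    show (∑ k, ∑ l, w x k l * pd k (bktM w h f) x * pd l g x) = _
    unfold Eexpr
    refine Finset.sum_congr rfl fun k _ => Finset.sum_congr rfl fun l _ => ?_
    rw [pd_bktM hw hh hf k x]
  rw [e1, e2, e3]
  have hz : ∀ F : Vec n → ℝ, SmC F → ∀ k i : Fin n,
      pd k (fun y => pd i F y) x - pd i (fun y => pd k F y) x
        = -∑ b, (0:ℝ) * pd b F x := by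
    intro F hF k i
    rw [pd_symm hF x k i]
    simp
  have := jac_algebra (w x) (fun k i j => pd k (fun y => w y i j) x)
    (fun _ _ _ => (0:ℝ)) (fun i j => hsk x j i) (fun b k i => by ring)
    (fun i => pd i f x) (fun i => pd i g x) (fun i => pd i h x)
    (fun i => pd i f x) (fun i => pd i g x) (fun i => pd i h x)
    (fun k i => pd k (fun y => pd i f y) x) (fun k i => pd k (fun y => pd i g y) x)
    (fun k i => pd k (fun y => pd i h y) x)
    (hz f hf) (hz g hg) (hz h hh)
  rw [this]
  simp
end BaseMaster

-- ====== final assembly helpers ======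
section Assembly
variable {n : ℕ} {w : Vec n → Fin n → Fin n → ℝ} {N : Cot n → Fin n → Fin n → ℝ}

lemma sum3_collapse (S : Fin n → Fin n → Fin n → ℝ) (a b c : Fin n) :
    (∑ i, ∑ j, ∑ l, S i j l * ((if a = i then (1:ℝ) else 0) * (if b = j then (1:ℝ) else 0)
      * (if c = l then (1:ℝ) else 0))) = S a b c := by
  simp [mul_ite, mul_one, mul_zero, ite_mul, zero_mul, Finset.sum_ite_eq]

lemma DTr_coord1 (k c : Fin n) (z : Cot n) :
    DT (Sum.inr k) (fun y : Cot n => y.1 c) z = 0 := DT_coord1 c (Sum.inr k) z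

lemma DTr_coord2 (k c : Fin n) (z : Cot n) :
    DT (Sum.inr k) (fun y : Cot n => y.2 c) z = if c = k then 1 else 0 :=
  DT_coord2 c (Sum.inr k) z

lemma cond2_equiv (hsk : SkewM w) :
    (∀ z (k i j : Fin n), ∑ l, ∑ h, w z.1 i l * w z.1 j h * curvN N z k l h = 0)
    ↔ (∀ z (b j l : Fin n), (∑ k, ∑ i, w z.1 k l * w z.1 i j * curvN N z b k i) = 0) := by
  constructor
  · intro hc z b j l
    have e : (∑ k, ∑ i, w z.1 k l * w z.1 i j * curvN N z b k i)
        = ∑ k, ∑ i, w z.1 l k * w z.1 j i * curvN N z b k i :=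
      Finset.sum_congr rfl fun k _ => Finset.sum_congr rfl fun i _ => by
        rw [hsk z.1 k l, hsk z.1 i j]; ring
    rw [e]
    exact hc z b l j
  · intro hT z k i j
    have e : (∑ l, ∑ h, w z.1 i l * w z.1 j h * curvN N z k l h)
        = ∑ l, ∑ h, w z.1 l i * w z.1 h j * curvN N z k l h :=
      Finset.sum_congr rfl fun l _ => Finset.sum_congr rfl fun h _ => by
        rw [hsk z.1 l i, hsk z.1 h j]; ring
    rw [e]
    exact hT z k j i
end Assembly


/-- `[w^H, w^H] = 0` iff `Σ_{cyc} w^{hk}∂_h w^{ij} = 0` (i.e. `[w,w] = 0`)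
and `w^{il}w^{jh}R_{klh} = 0`; equivalently, `w^H` is Poisson iff `w` is Poisson and
`R(X_f^H, X_g^H) = 0` for all `f,g ∈ C^∞(M)`; in that case `π` is a Poisson mapping. -/
theorem stmt15 {n : ℕ} (w : Vec n → Fin n → Fin n → ℝ) (hsk : SkewM w) (hsm : SmoothM w)
    (N : Cot n → Fin n → Fin n → ℝ) (hNsm : ∀ i j, Sm fun z => N z i j)
    (hNsym : ∀ z i j, N z i j = N z j i) :
    (JacobiT (WH w N) ↔
      ((∀ x (i j k : Fin n),
          ∑ h, (w x h i * pd h (fun y => w y j k) x + w x h j * pd h (fun y => w y k i) x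
            + w x h k * pd h (fun y => w y i j) x) = 0) ∧
       (∀ z (k i j : Fin n), ∑ l, ∑ h, w z.1 i l * w z.1 j h * curvN N z k l h = 0))) ∧
    (JacobiT (WH w N) ↔
      (JacobiM w ∧
       (∀ f g : Vec n → ℝ, Sm f → Sm g → ∀ z (k : Fin n),
          ∑ l, ∑ h, curvN N z k l h * ham w f z.1 l * ham w g z.1 h = 0))) ∧
    (JacobiT (WH w N) → PiRel (WH w N) w) := by
  have hw : ∀ i j, SmC fun x => w x i j := fun i j => (hsm i j).smC
  have hN : ∀ i j, SmC fun z => N z i j := fun i j => (hNsm i j).smC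
  -- first equivalence
  have iff1 : JacobiT (WH w N) ↔
      ((∀ x (i j k : Fin n),
          ∑ h, (w x h i * pd h (fun y => w y j k) x + w x h j * pd h (fun y => w y k i) x
            + w x h k * pd h (fun y => w y i j) x) = 0) ∧
       (∀ z (k i j : Fin n), ∑ l, ∑ h, w z.1 i l * w z.1 j h * curvN N z k l h = 0)) := by
    constructor
    · intro hJ
      have hc1 : ∀ x (i j k : Fin n),
          ∑ h, (w x h i * pd h (fun y => w y j k) x + w x h j * pd h (fun y => w y k i) x
            + w x h k * pd h (fun y => w y i j) x) = 0 := by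
        intro x a b c
        have h0 := hJ (fun z => z.1 a) (fun z => z.1 b) (fun z => z.1 c)
          (sm_coord1 a) (sm_coord1 b) (sm_coord1 c) (x, 0)
        rw [master hsk hw hN hNsym (sm_coord1 a).smC (sm_coord1 b).smC (sm_coord1 c).smC
          (x, 0)] at h0
        simp only [delx_coord1, DTr_coord1, zero_mul, add_zero, zero_add, mul_zero,
          Finset.sum_const_zero, sub_zero] at h0
        rw [sum3_collapse] at h0
        exact h0
      refine ⟨hc1, (cond2_equiv hsk).mpr ?_⟩
      intro z β γ δ
      have h0 := hJ (fun y => y.1 γ) (fun y => y.1 δ) (fun y => y.2 β)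
        (sm_coord1 γ) (sm_coord1 δ) (sm_coord2 β) z
      rw [master hsk hw hN hNsym (sm_coord1 γ).smC (sm_coord1 δ).smC (sm_coord2 β).smC z] at h0
      have hS0 : ∀ i j l : Fin n, (∑ k, (w z.1 k i * pd k (fun x => w x j l) z.1
          + w z.1 k j * pd k (fun x => w x l i) z.1
          + w z.1 k l * pd k (fun x => w x i j) z.1)) = 0 := fun i j l => hc1 z.1 i j l
      simp only [delx_coord1, delx_coord2, DTr_coord1, DTr_coord2, zero_mul, mul_zero,
        add_zero, zero_add] at h0
      simp only [hS0, zero_mul, Finset.sum_const_zero, zero_sub, neg_eq_zero] at h0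
      rw [sum3_collapse] at h0
      exact h0
    · rintro ⟨hc1, hc2⟩ F G H hF hG hH z
      rw [master hsk hw hN hNsym hF.smC hG.smC hH.smC z]
      have hS0 : ∀ i j l : Fin n, (∑ k, (w z.1 k i * pd k (fun x => w x j l) z.1
          + w z.1 k j * pd k (fun x => w x l i) z.1
          + w z.1 k l * pd k (fun x => w x i j) z.1)) = 0 := fun i j l => hc1 z.1 i j l
      have hT0 := (cond2_equiv hsk).mp hc2
      simp only [hS0, hT0, zero_mul, Finset.sum_const_zero, sub_zero]
  -- JacobiM ↔ condition 1
  have iffM : JacobiM w ↔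
      (∀ x (i j k : Fin n),
          ∑ h, (w x h i * pd h (fun y => w y j k) x + w x h j * pd h (fun y => w y k i) x
            + w x h k * pd h (fun y => w y i j) x) = 0) := by
    constructor
    · intro hJ x a b c
      have h0 := hJ (fun y => y a) (fun y => y b) (fun y => y c)
        (sm_coordM a) (sm_coordM b) (sm_coordM c) x
      rw [masterM hsk hw (sm_coordM a).smC (sm_coordM b).smC (sm_coordM c).smC x] at h0
      simp only [pd_coord] at h0
      rw [sum3_collapse] at h0
      exact h0
    · intro hc1 f g h hf hg hh x
      rw [masterM hsk hw hf.smC hg.smC hh.smC x]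
      have hS0 : ∀ i j l : Fin n, (∑ k, (w x k i * pd k (fun y => w y j l) x
          + w x k j * pd k (fun y => w y l i) x
          + w x k l * pd k (fun y => w y i j) x)) = 0 := fun i j l => hc1 x i j l
      simp only [hS0, zero_mul, Finset.sum_const_zero]
  -- curvature condition ↔ hamiltonian form
  have iffham : (∀ z (k i j : Fin n), ∑ l, ∑ h, w z.1 i l * w z.1 j h * curvN N z k l h = 0)
      ↔ (∀ f g : Vec n → ℝ, Sm f → Sm g → ∀ z (k : Fin n),
          ∑ l, ∑ h, curvN N z k l h * ham w f z.1 l * ham w g z.1 h = 0) := by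
    constructor
    · intro hc2 f g hf hg z k
      have expand : (∑ l, ∑ h, curvN N z k l h * ham w f z.1 l * ham w g z.1 h)
          = ∑ i, ∑ j, (∑ l, ∑ h, w z.1 i l * w z.1 j h * curvN N z k l h)
              * (pd i f z.1 * pd j g z.1) := by
        have hpt : ∀ l h : Fin n, curvN N z k l h * ham w f z.1 l * ham w g z.1 h
            = ∑ i, ∑ j, w z.1 i l * w z.1 j h * curvN N z k l h
                * (pd i f z.1 * pd j g z.1) := by
          intro l h
          show curvN N z k l h * (∑ i, w z.1 i l * pd i f z.1)
              * (∑ j, w z.1 j h * pd j g z.1) = _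
          rw [mul_assoc, Finset.sum_mul_sum, Finset.mul_sum]
          refine Finset.sum_congr rfl fun i _ => ?_
          rw [Finset.mul_sum]
          exact Finset.sum_congr rfl fun j _ => by ring
        rw [Finset.sum_congr rfl fun l (_ : l ∈ Finset.univ) => Finset.sum_congr rfl
          fun h (_ : h ∈ Finset.univ) => hpt l h]
        rw [sum4_pairswap (fun l h i j => w z.1 i l * w z.1 j h * curvN N z k l h
          * (pd i f z.1 * pd j g z.1))]
        refine Finset.sum_congr rfl fun i _ => Finset.sum_congr rfl fun j _ => ?_
        rw [Finset.sum_mul]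
        refine Finset.sum_congr rfl fun l _ => ?_
        rw [Finset.sum_mul]
      rw [expand]
      simp only [hc2, zero_mul, Finset.sum_const_zero]
    · intro hh z k i0 j0
      have hham : ∀ (a : Fin n) (x : Vec n) (l : Fin n), ham w (fun y => y a) x l = w x a l := by
        intro a x l
        show (∑ i, w x i l * pd i (fun y => y a) x) = w x a l
        simp only [pd_coord]
        simp [mul_ite, Finset.sum_ite_eq]
      have h0 := hh (fun y => y i0) (fun y => y j0) (sm_coordM i0) (sm_coordM j0) z k
      simp only [hham] at h0
      have e : (∑ l, ∑ h, w z.1 i0 l * w z.1 j0 h * curvN N z k l h)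
          = ∑ l, ∑ h, curvN N z k l h * w z.1 i0 l * w z.1 j0 h :=
        Finset.sum_congr rfl fun l _ => Finset.sum_congr rfl fun h _ => by ring
      rw [e]
      exact h0
  -- π is a Poisson map
  have piRel : PiRel (WH w N) w := by
    intro f g hf hg z
    rw [bkt_WH hsk z]
    show _ = ∑ i, ∑ j, w z.1 i j * pd i f z.1 * pd j g z.1
    refine Finset.sum_congr rfl fun i _ => Finset.sum_congr rfl fun j _ => ?_
    rw [delx_base (hf.smC.diffAt z.1) i, delx_base (hg.smC.diffAt z.1) j]
  exact ⟨iff1, iff1.trans (and_congr iffM.symm iffham), fun _ => piRel⟩
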